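/- arXiv:2403.15578 — 3 statements merged into one kernel-verified Lean document; each statement's English description precedes it below -/
import Mathlib

section
/- Let k ≥ 2 and 1 ≤ r < k-1 be integers with r not dividing k-1, and suppose diam(K(2k+r,k)) = 2p+1 for some p ≥ 1. Then two k-subsets A, B of [2k+r] are at distance exactly 2p+1 in K(2k+r,k) if and only if rp - r + 1 ≤ |A ∩ B| ≤ k - rp - 1. -/
/-- The Kneser graph: vertices are the `k`-subsets of `[n]`, adjacency is disjointness. -/
def kneserGraph (n k : ℕ) : SimpleGraph {A : Finset (Fin n) // A.card = k} where
  Adj A B := A ≠ B ∧ Disjoint A.1 B.1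
  symm := ⟨fun A B h => ⟨h.1.symm, h.2.symm⟩⟩
  loopless := ⟨fun A h => h.1 rfl⟩

/-- The exact distance-`d` graph of a graph `G`. -/
def exactDistanceGraph {V : Type*} (G : SimpleGraph V) (d : ℕ) : SimpleGraph V where
  Adj A B := A ≠ B ∧ G.dist A B = d
  symm := ⟨fun A B h => ⟨h.1.symm, by rw [SimpleGraph.dist_comm]; exact h.2⟩⟩
  loopless := ⟨fun A h => h.1 rfl⟩

/-!
If `X` and `Y` are disjoint `k`-subsets of `[2k+r]`, their union misses exactly `r` points, so every
`k`-set `B` satisfies `k - r ≤ |X ∩ B| + |Y ∩ B| ≤ k`. Along a walk from `A` to `B` this gives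
`|A ∩ B| ≥ k - mr` if the walk has length `2m` and `|A ∩ B| ≤ mr` if it has length `2m + 1`.
Conversely, two steps `A → C → A'` can raise the intersection with `B` by `min(r, k - |A ∩ B|)`,
so both bounds are attained. Hence `dist(A, B) ≤ 2p` exactly when `|A ∩ B| ≥ k - pr` or
`|A ∩ B| ≤ (p - 1)r`, and as the diameter is `2p + 1`, every other pair is at distance `2p + 1`.
-/

open Finset SimpleGraph

namespace Finset

variable {α : Type*} [DecidableEq α]

lemma card_inter_add_card_inter_le_of_disjoint {X Y : Finset α} (h : Disjoint X Y) (B : Finset α) :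
    #(X ∩ B) + #(Y ∩ B) ≤ #B := by
  rw [← card_union_of_disjoint (h.mono inter_subset_left inter_subset_left)]
  exact card_le_card (union_subset inter_subset_right inter_subset_right)

lemma card_le_card_inter_add_card_inter_add_card_compl [Fintype α] (X Y B : Finset α) :
    #B ≤ #(X ∩ B) + #(Y ∩ B) + #(X ∪ Y)ᶜ := by
  have hB : B ⊆ (X ∩ B ∪ Y ∩ B) ∪ (X ∪ Y)ᶜ := by
    intro a ha
    by_cases hX : a ∈ X <;> by_cases hY : a ∈ Y <;> simp [*]
  calc #B ≤ #(X ∩ B ∪ Y ∩ B) + #(X ∪ Y)ᶜ := (card_le_card hB).trans (card_union_le _ _)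
    _ ≤ #(X ∩ B) + #(Y ∩ B) + #(X ∪ Y)ᶜ := by gcongr; exact card_union_le _ _

end Finset

lemma SimpleGraph.Reachable.dist_le_iff_exists_walk {V : Type*} {G : SimpleGraph V} {u v : V}
    (h : G.Reachable u v) {n : ℕ} : G.dist u v ≤ n ↔ ∃ W : G.Walk u v, W.length ≤ n := by
  refine ⟨fun hn => ?_, fun ⟨W, hW⟩ => (dist_le W).trans hW⟩
  obtain ⟨W, hW⟩ := h.exists_walk_length_eq_dist
  exact ⟨W, hW ▸ hn⟩

namespace kneserGraph

section

variable {n k : ℕ} {A B : {A : Finset (Fin n) // #A = k}}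

lemma eq_of_le_card_inter (h : k ≤ #(A.1 ∩ B.1)) : A = B := by
  have hA := eq_of_subset_of_card_le inter_subset_left (A.2.trans_le h)
  have hB := eq_of_subset_of_card_le inter_subset_right (B.2.trans_le h)
  exact Subtype.ext (hA.symm.trans hB)

lemma adj_of_disjoint (hk : 0 < k) (h : Disjoint A.1 B.1) : (kneserGraph n k).Adj A B := by
  refine ⟨fun hAB => ?_, h⟩
  subst hAB
  have := A.2
  simp_all

end

variable {k r : ℕ} {A B : {A : Finset (Fin (2 * k + r)) // #A = k}}

lemma card_compl_union_of_adj {X Y : {A : Finset (Fin (2 * k + r)) // #A = k}}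
    (h : (kneserGraph (2 * k + r) k).Adj X Y) : #(X.1 ∪ Y.1)ᶜ = r := by
  rw [card_compl, card_union_of_disjoint h.2, X.2, Y.2, Fintype.card_fin]
  omega

lemma card_inter_bounds_of_walk (W : (kneserGraph (2 * k + r) k).Walk A B) (m : ℕ) :
    (W.length = 2 * m → k ≤ #(A.1 ∩ B.1) + m * r) ∧
      (W.length = 2 * m + 1 → #(A.1 ∩ B.1) ≤ m * r) := by
  induction W generalizing m with
  | @nil A =>
    refine ⟨fun hm => ?_, fun hm => by simp at hm⟩
    rw [inter_self, A.2]
    omega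
  | @cons X Y B hXY W ih =>
    have hle := card_inter_add_card_inter_le_of_disjoint hXY.2 B.1
    have hge := card_le_card_inter_add_card_inter_add_card_compl X.1 Y.1 B.1
    rw [card_compl_union_of_adj hXY, B.2] at hge
    rw [B.2] at hle
    rw [Walk.length_cons]
    refine ⟨fun hm => ?_, fun hm => ?_⟩
    · obtain ⟨j, rfl⟩ : ∃ j, m = j + 1 := ⟨m - 1, by omega⟩
      have := (ih j).2 (by omega)
      rw [add_mul, one_mul]
      omega
    · have := (ih m).1 (by omega)
      omega

/-- Enlarge `A ∩ B` inside `B` to a set `E` of size `#(A ∩ B) + d`; since `#(A ∪ E) = k + d ≤ k + r`,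
some `k`-set `C` avoids `A ∪ E`, and some `k`-set `A' ⊇ E` avoids `C`. -/
lemma exists_adj_adj_le_card_inter {d : ℕ} (hk : 0 < k) (hdr : d ≤ r)
    (hdk : #(A.1 ∩ B.1) + d ≤ k) :
    ∃ C A' : {A : Finset (Fin (2 * k + r)) // #A = k},
      (kneserGraph (2 * k + r) k).Adj A C ∧ (kneserGraph (2 * k + r) k).Adj C A' ∧
        #(A.1 ∩ B.1) + d ≤ #(A'.1 ∩ B.1) := by
  obtain ⟨E, hAE, hEB, hE⟩ := exists_subsuperset_card_eq (inter_subset_right (s₁ := A.1))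
    (le_add_right le_rfl) (hdk.trans_eq B.2.symm)
  have hAE' : #(A.1 ∩ B.1) ≤ #(A.1 ∩ E) := card_le_card (subset_inter inter_subset_left hAE)
  have hAuE := card_union_add_card_inter A.1 E
  obtain ⟨C, hC, hCc⟩ := exists_subset_card_eq (s := (A.1 ∪ E)ᶜ) (n := k) (by
    rw [card_compl, Fintype.card_fin]
    rw [A.2] at hAuE
    omega)
  have hCAE : Disjoint C (A.1 ∪ E) := disjoint_of_subset_left hC disjoint_compl_left
  obtain ⟨A', hEA', hA'C, hA'c⟩ := exists_subsuperset_card_eq (n := k)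
    (subset_compl_comm.mp (hC.trans (compl_subset_compl.mpr subset_union_right)))
    (by omega) (by rw [card_compl, Fintype.card_fin, hCc]; omega)
  refine ⟨⟨C, hCc⟩, ⟨A', hA'c⟩, adj_of_disjoint hk (disjoint_union_right.mp hCAE).1.symm,
    adj_of_disjoint hk (disjoint_of_subset_right hA'C disjoint_compl_right), ?_⟩
  rw [← hE]
  exact card_le_card (subset_inter hEA' hEB)

lemma exists_walk_length_le_two_mul {m : ℕ} (h : k ≤ #(A.1 ∩ B.1) + m * r) :
    ∃ W : (kneserGraph (2 * k + r) k).Walk A B, W.length ≤ 2 * m := by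
  induction m generalizing A with
  | zero =>
    obtain rfl := eq_of_le_card_inter (by simpa using h)
    exact ⟨.nil, le_rfl⟩
  | succ m ih =>
    by_cases hAB : k ≤ #(A.1 ∩ B.1)
    · obtain rfl := eq_of_le_card_inter hAB
      exact ⟨.nil, Nat.zero_le _⟩
    obtain ⟨C, A', hAC, hCA', hA'⟩ := exists_adj_adj_le_card_inter (A := A) (B := B)
      (d := min r (k - #(A.1 ∩ B.1))) (by omega) (min_le_left _ _) (by omega)
    obtain ⟨W, hW⟩ := ih (A := A') (by rw [add_one_mul] at h; omega)
    exact ⟨.cons hAC (.cons hCA' W), by simp only [Walk.length_cons]; omega⟩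

lemma exists_walk_length_le_two_mul_add_one {m : ℕ} (h : #(A.1 ∩ B.1) ≤ m * r) :
    ∃ W : (kneserGraph (2 * k + r) k).Walk A B, W.length ≤ 2 * m + 1 := by
  by_cases hAB : k ≤ #(A.1 ∩ B.1)
  · obtain rfl := eq_of_le_card_inter hAB
    exact ⟨.nil, Nat.zero_le _⟩
  have hsplit := card_inter_add_card_sdiff A.1 B.1
  obtain ⟨C, hAC, hCB, hC⟩ := exists_subsuperset_card_eq (n := k)
    ((sdiff_eq_inter_compl A.1 B.1).trans_subset inter_subset_right) (by omega) (by rw [card_compl, Fintype.card_fin, B.2]; omega)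
  have hAC' : #(A.1 \ B.1) ≤ #(A.1 ∩ C) := card_le_card (subset_inter sdiff_subset hAC)
  obtain ⟨W, hW⟩ := exists_walk_length_le_two_mul (A := A) (B := ⟨C, hC⟩) (m := m)
    (by dsimp only; omega)
  exact ⟨W.concat (adj_of_disjoint (by omega) (disjoint_of_subset_left hCB disjoint_compl_left)),
    by rw [Walk.length_concat]; omega⟩

lemma exists_walk_length_le_two_mul_add_two_iff {m : ℕ} :
    (∃ W : (kneserGraph (2 * k + r) k).Walk A B, W.length ≤ 2 * m + 2) ↔
      k ≤ #(A.1 ∩ B.1) + (m + 1) * r ∨ #(A.1 ∩ B.1) ≤ m * r := by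
  refine ⟨fun ⟨W, hW⟩ => ?_, fun h => ?_⟩
  · obtain ⟨j, hj | hj⟩ := Nat.even_or_odd' W.length
    · exact .inl (((card_inter_bounds_of_walk W j).1 hj).trans (by gcongr; omega))
    · exact .inr (((card_inter_bounds_of_walk W j).2 hj).trans (by gcongr; omega))
  · rcases h with h | h
    · exact (exists_walk_length_le_two_mul h).imp fun _ hW => by omega
    · exact (exists_walk_length_le_two_mul_add_one h).imp fun _ hW => by omega

end kneserGraph

theorem stmt8_general (k r p : ℕ) (hp : 1 ≤ p)
    (hdiam : (kneserGraph (2 * k + r) k).diam = 2 * p + 1)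
    (A B : {A : Finset (Fin (2 * k + r)) // A.card = k}) :
    (kneserGraph (2 * k + r) k).dist A B = 2 * p + 1 ↔
      r * p - r + 1 ≤ (A.1 ∩ B.1).card ∧ (A.1 ∩ B.1).card ≤ k - r * p - 1 := by
  have hediam := ediam_ne_top_of_diam_ne_zero (G := kneserGraph (2 * k + r) k) (by omega)
  have hle : (kneserGraph (2 * k + r) k).dist A B ≤ 2 * p + 1 := hdiam ▸ dist_le_diam hediam
  obtain ⟨q, rfl⟩ : ∃ q, p = q + 1 := ⟨p - 1, by omega⟩
  have hshort := ((preconnected_of_ediam_ne_top hediam A B).dist_le_iff_exists_walk).trans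
    (kneserGraph.exists_walk_length_le_two_mul_add_two_iff (m := q))
  have hrq : r * (q + 1) = (q + 1) * r := mul_comm _ _
  have hrq' : q * r + r = (q + 1) * r := (add_one_mul _ _).symm
  have hexact : (kneserGraph (2 * k + r) k).dist A B = 2 * (q + 1) + 1 ↔
      ¬ (kneserGraph (2 * k + r) k).dist A B ≤ 2 * q + 2 := by omega
  rw [hexact, hshort]
  omega

theorem stmt8 (k r p : ℕ) (hk : 2 ≤ k) (hr : 1 ≤ r) (hrk : r < k - 1) (hp : 1 ≤ p)
    (hnd : ¬ r ∣ (k - 1)) (hdiam : (kneserGraph (2 * k + r) k).diam = 2 * p + 1)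
    (A B : {A : Finset (Fin (2 * k + r)) // A.card = k}) :
    (kneserGraph (2 * k + r) k).dist A B = 2 * p + 1 ↔
      r * p - r + 1 ≤ (A.1 ∩ B.1).card ∧ (A.1 ∩ B.1).card ≤ k - r * p - 1 :=
  stmt8_general k r p hp hdiam A B
end

section
/- Let k ≥ 2, 1 ≤ r < k-1, p ≥ 1, and let A, B be non-adjacent k-subsets of [2k+r] in the exact distance-2p Kneser graph K_{=2p}(2k+r,k) with |A ∩ B| = s. Then dist_{K_{=2p}(2k+r,k)}(A,B) = max{2, ⌈(k-s)/(rp)⌉}. -/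
open Finset SimpleGraph

theorem Finset.card_sdiff_le_card_sdiff_add_card_sdiff {α : Type*} [DecidableEq α]
    (s t u : Finset α) : #(s \ u) ≤ #(s \ t) + #(t \ u) :=
  (card_le_card (sdiff_triangle s t u)).trans (card_union_le _ _)

/-- `C` takes `a` points of `X ∩ Y`, `b` of `X \ Y`, `c` of `Y \ X` and `d` outside `X ∪ Y`. -/
theorem Finset.exists_card_sdiff_eq {α : Type*} [Fintype α] [DecidableEq α] (X Y : Finset α)
    {a b c d : ℕ} (ha : a ≤ #(X ∩ Y)) (hb : b ≤ #(X \ Y)) (hc : c ≤ #(Y \ X))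
    (hd : d ≤ #(X ∪ Y)ᶜ) :
    ∃ C : Finset α, #C = a + b + c + d ∧ #(C \ X) = c + d ∧ #(C \ Y) = b + d := by
  obtain ⟨Sa, hSa, rfl⟩ := exists_subset_card_eq ha
  obtain ⟨Sb, hSb, rfl⟩ := exists_subset_card_eq hb
  obtain ⟨Sc, hSc, rfl⟩ := exists_subset_card_eq hc
  obtain ⟨Sd, hSd, rfl⟩ := exists_subset_card_eq hd
  have hA : ∀ x ∈ Sa, x ∈ X ∧ x ∈ Y := fun x hx => mem_inter.mp (hSa hx)
  have hB : ∀ x ∈ Sb, x ∈ X ∧ x ∉ Y := fun x hx => mem_sdiff.mp (hSb hx)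
  have hC : ∀ x ∈ Sc, x ∈ Y ∧ x ∉ X := fun x hx => mem_sdiff.mp (hSc hx)
  have hD : ∀ x ∈ Sd, x ∉ X ∧ x ∉ Y := fun x hx => by simpa [not_or] using hSd hx
  refine ⟨Sa ∪ Sb ∪ Sc ∪ Sd, ?_, ?_, ?_⟩
  · rw [card_union_of_disjoint, card_union_of_disjoint, card_union_of_disjoint]
    all_goals exact disjoint_left.mpr fun x hx hx' => by grind
  · rw [show (Sa ∪ Sb ∪ Sc ∪ Sd) \ X = Sc ∪ Sd by grind,
      card_union_of_disjoint (disjoint_left.mpr fun x hx hx' => by grind)]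
  · rw [show (Sa ∪ Sb ∪ Sc ∪ Sd) \ Y = Sb ∪ Sd by grind,
      card_union_of_disjoint (disjoint_left.mpr fun x hx hx' => by grind)]

theorem SimpleGraph.Walk.card_sdiff_le_length_mul {α V : Type*} [DecidableEq α]
    {G : SimpleGraph V} (f : V → Finset α) {c : ℕ} (hG : ∀ X Y, G.Adj X Y → #(f X \ f Y) ≤ c)
    {X Y : V} (w : G.Walk X Y) : #(f X \ f Y) ≤ w.length * c := by
  induction w with
  | nil => simp
  | @cons X Z Y h w ih =>
    calc #(f X \ f Y) ≤ #(f X \ f Z) + #(f Z \ f Y) := card_sdiff_le_card_sdiff_add_card_sdiff ..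
      _ ≤ c + w.length * c := add_le_add (hG X Z h) ih
      _ = (w.cons h).length * c := by rw [length_cons]; ring

abbrev KneserVertex (n k : ℕ) := {A : Finset (Fin n) // A.card = k}

namespace Kneser

variable {k r : ℕ}

local notation "V" => KneserVertex (2 * k + r) k
local notation "K" => kneserGraph (2 * k + r) k

theorem card_compl_eq (X : V) : #X.1ᶜ = k + r := by
  rw [Finset.card_compl, X.2, Fintype.card_fin]; omega

theorem card_inter_add_card_sdiff (X Y : V) : #(X.1 ∩ Y.1) + #(X.1 \ Y.1) = k := by
  rw [add_comm, card_sdiff_add_card_inter, X.2]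

theorem card_sdiff_comm (X Y : V) : #(X.1 \ Y.1) = #(Y.1 \ X.1) :=
  Finset.card_sdiff_comm (X.2.trans Y.2.symm)

theorem eq_of_card_sdiff_eq_zero {X Y : V} (h : #(X.1 \ Y.1) = 0) : X = Y :=
  Subtype.ext <| eq_of_subset_of_card_le (sdiff_eq_empty_iff_subset.mp (card_eq_zero.mp h))
    (by rw [X.2, Y.2])

theorem adj_iff (hk : 1 ≤ k) {X Y : V} : (K).Adj X Y ↔ Disjoint X.1 Y.1 := by
  refine ⟨And.right, fun h => ⟨?_, h⟩⟩
  rintro rfl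
  have := X.2
  simp [disjoint_self.mp h] at this
  omega

theorem exists_card_sdiff_eq (X Y : V) {a b c d : ℕ} (ha : a + #(X.1 \ Y.1) ≤ k)
    (hb : b ≤ #(X.1 \ Y.1)) (hc : c ≤ #(X.1 \ Y.1)) (hd : d + #(X.1 \ Y.1) ≤ k + r)
    (hsum : a + b + c + d = k) :
    ∃ C : V, #(X.1 \ C.1) = c + d ∧ #(C.1 \ Y.1) = b + d := by
  have hXY := card_inter_add_card_sdiff X Y
  have hunion : #(X.1 ∪ Y.1)ᶜ + #(X.1 \ Y.1) = k + r := by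
    have := card_sdiff_add_card X.1 Y.1
    have := card_le_univ (X.1 ∪ Y.1)
    rw [Finset.card_compl, Fintype.card_fin] at *
    omega
  obtain ⟨C, hC, hCX, hCY⟩ := Finset.exists_card_sdiff_eq X.1 Y.1 (a := a) (b := b) (c := c)
    (d := d) (by omega) hb (by rwa [← card_sdiff_comm]) (by omega)
  exact ⟨⟨C, hC ▸ hsum⟩, by rw [card_sdiff_comm, hCX], hCY⟩

theorem exists_card_sdiff_eq_sub {X Y : V} {m : ℕ} (hm : m ≤ #(X.1 \ Y.1)) :
    ∃ C : V, #(X.1 \ C.1) = m ∧ #(C.1 \ Y.1) = #(X.1 \ Y.1) - m := by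
  have := card_inter_add_card_sdiff X Y
  simpa using exists_card_sdiff_eq X Y (a := k - #(X.1 \ Y.1)) (b := #(X.1 \ Y.1) - m) (c := m)
    (d := 0) (by omega) (by omega) hm (by omega) (by omega)

theorem card_sdiff_le_of_adj_adj {X Y Z : V} (hXZ : (K).Adj X Z) (hZY : (K).Adj Z Y) :
    #(X.1 \ Y.1) ≤ r := by
  have hsub : X.1 ∪ Y.1 ⊆ Z.1ᶜ :=
    union_subset (subset_compl_iff_disjoint_right.mpr hXZ.2)
      (subset_compl_iff_disjoint_left.mpr hZY.2)
  have := card_le_card hsub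
  rw [card_compl_eq, ← card_sdiff_add_card, Y.2] at this
  omega

theorem exists_adj_adj (hk : 1 ≤ k) {X Y : V} (h : #(X.1 \ Y.1) ≤ r) :
    ∃ Z, (K).Adj X Z ∧ (K).Adj Z Y := by
  have hcompl : k ≤ #(X.1 ∪ Y.1)ᶜ := by
    have := card_sdiff_add_card X.1 Y.1
    rw [Finset.card_compl, Fintype.card_fin, ← this, Y.2]
    omega
  obtain ⟨Z, hZ, hZk⟩ := exists_subset_card_eq hcompl
  rw [subset_compl_iff_disjoint_right, disjoint_union_right] at hZ
  exact ⟨⟨Z, hZk⟩, (adj_iff hk).mpr hZ.1.symm, (adj_iff hk).mpr hZ.2⟩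

theorem card_sdiff_le_of_length_eq_two_mul {q : ℕ} {X Y : V} (w : (K).Walk X Y)
    (hw : w.length = 2 * q) : #(X.1 \ Y.1) ≤ r * q := by
  induction q generalizing X with
  | zero => simp [w.eq_of_length_eq_zero (by omega)]
  | succ q ih =>
    rcases w with _ | ⟨h₁, _ | ⟨h₂, w⟩⟩
    · simp at hw
    · simp only [Walk.length_cons, Walk.length_nil] at hw; omega
    · simp only [Walk.length_cons] at hw
      calc #(X.1 \ Y.1) ≤ #(X.1 \ _) + #(_ \ Y.1) := card_sdiff_le_card_sdiff_add_card_sdiff ..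
        _ ≤ r + r * q := add_le_add (card_sdiff_le_of_adj_adj h₁ h₂) (ih w (by omega))
        _ = r * (q + 1) := by ring

theorem card_inter_le_of_length_eq_two_mul_add_one {q : ℕ} {X Y : V} (w : (K).Walk X Y)
    (hw : w.length = 2 * q + 1) : #(X.1 ∩ Y.1) ≤ r * q := by
  rcases w with _ | ⟨h, w⟩
  · simp at hw
  · rename_i Z
    have hsub : X.1 ∩ Y.1 ⊆ Y.1 \ Z.1 := fun x hx =>
      mem_sdiff.mpr ⟨(mem_inter.mp hx).2, disjoint_left.mp h.2 (mem_inter.mp hx).1⟩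
    calc #(X.1 ∩ Y.1) ≤ #(Y.1 \ Z.1) := card_le_card hsub
      _ = #(Z.1 \ Y.1) := card_sdiff_comm Y Z
      _ ≤ r * q := card_sdiff_le_of_length_eq_two_mul w (by simp only [Walk.length_cons] at hw; omega)

theorem exists_walk_length_eq_two_mul (hk : 1 ≤ k) {q : ℕ} {X Y : V}
    (h : #(X.1 \ Y.1) ≤ r * q) : ∃ w : (K).Walk X Y, w.length = 2 * q := by
  induction q generalizing X with
  | zero =>
    obtain rfl := eq_of_card_sdiff_eq_zero (by simpa using h)
    exact ⟨.nil, rfl⟩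
  | succ q ih =>
    obtain ⟨C, hXC, hCY⟩ := exists_card_sdiff_eq_sub (min_le_right r #(X.1 \ Y.1))
    obtain ⟨Z, hXZ, hZC⟩ := exists_adj_adj hk (hXC.trans_le (min_le_left _ _))
    obtain ⟨w, hw⟩ := ih (X := C) (by rw [mul_add_one] at h; omega)
    exact ⟨.cons hXZ (.cons hZC w), by simp only [Walk.length_cons, hw]; ring⟩

theorem exists_walk_length_eq_two_mul_add_one (hk : 1 ≤ k) {q : ℕ} {X Y : V}
    (h : #(X.1 ∩ Y.1) ≤ r * q) : ∃ w : (K).Walk X Y, w.length = 2 * q + 1 := by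
  have hYX : Y.1 \ X.1 ⊆ X.1ᶜ := fun y hy => mem_compl.mpr (mem_sdiff.mp hy).2
  obtain ⟨Z, hYZ, hZX, hZk⟩ := exists_subsuperset_card_eq (n := k) hYX
    ((card_le_card sdiff_subset).trans Y.2.le) (by rw [card_compl_eq]; omega)
  -- `Z` is a neighbour of `X` containing `Y \ X`, so it is within `|X ∩ Y|` of `Y`
  have hsub : Y.1 \ Z ⊆ X.1 ∩ Y.1 := fun y hy => by grind
  obtain ⟨w, hw⟩ := exists_walk_length_eq_two_mul hk (q := q) (X := ⟨Z, hZk⟩) (Y := Y) <| by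
    rw [card_sdiff_comm]; exact (card_le_card hsub).trans h
  exact ⟨.cons ((adj_iff hk).mpr (subset_compl_iff_disjoint_right.mp hZX).symm) w, by simp [hw]⟩

theorem reachable (hk : 1 ≤ k) (hr : 1 ≤ r) (X Y : V) : (K).Reachable X Y :=
  (exists_walk_length_eq_two_mul hk (q := k) (X := X) (Y := Y)
    (((card_le_card sdiff_subset).trans X.2.le).trans (Nat.le_mul_of_pos_left k hr))).elim
    fun w _ => ⟨w⟩

theorem two_mul_add_two_le_dist_iff (hk : 1 ≤ k) (hr : 1 ≤ r) {q : ℕ} {X Y : V} :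
    2 * q + 2 ≤ (K).dist X Y ↔ r * q < #(X.1 \ Y.1) ∧ r * q < #(X.1 ∩ Y.1) := by
  constructor
  · intro h
    constructor <;> by_contra! hle
    · obtain ⟨w, hw⟩ := exists_walk_length_eq_two_mul hk hle
      have := dist_le w
      omega
    · obtain ⟨w, hw⟩ := exists_walk_length_eq_two_mul_add_one hk hle
      have := dist_le w
      omega
  · rintro ⟨hsdiff, hinter⟩
    by_contra! hlt
    obtain ⟨w, hw⟩ := (reachable hk hr X Y).exists_walk_length_eq_dist
    obtain ⟨j, hj | hj⟩ := Nat.even_or_odd' ((K).dist X Y)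
    · have := card_sdiff_le_of_length_eq_two_mul w (hw.trans hj)
      have := Nat.mul_le_mul_left r (show j ≤ q by omega)
      omega
    · have := card_inter_le_of_length_eq_two_mul_add_one w (hw.trans hj)
      have := Nat.mul_le_mul_left r (show j ≤ q by omega)
      omega

theorem exactDistanceGraph_adj_iff (hk : 1 ≤ k) (hr : 1 ≤ r) {q : ℕ} {X Y : V} :
    (exactDistanceGraph K (2 * (q + 1))).Adj X Y ↔
      r * q < #(X.1 \ Y.1) ∧ #(X.1 \ Y.1) ≤ r * (q + 1) ∧ r * q < #(X.1 ∩ Y.1) := by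
  constructor
  · rintro ⟨-, hdist⟩
    obtain ⟨hsdiff, hinter⟩ :=
      (two_mul_add_two_le_dist_iff hk hr).mp (by omega : 2 * q + 2 ≤ (K).dist X Y)
    obtain ⟨w, hw⟩ := (reachable hk hr X Y).exists_walk_length_eq_dist
    exact ⟨hsdiff, card_sdiff_le_of_length_eq_two_mul w (hw.trans hdist), hinter⟩
  · rintro ⟨hsdiff, hle, hinter⟩
    refine ⟨fun hXY => by simp [hXY] at hsdiff, le_antisymm ?_ ?_⟩
    · obtain ⟨w, hw⟩ := exists_walk_length_eq_two_mul hk hle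
      exact hw ▸ dist_le w
    · have := (two_mul_add_two_le_dist_iff hk hr).mpr ⟨hsdiff, hinter⟩
      omega

theorem two_mul_le_of_le_diam (hk : 1 ≤ k) (hr : 1 ≤ r) {q : ℕ} (hdiam : 2 * (q + 1) ≤ (K).diam) :
    2 * (r * q + 1) ≤ k := by
  have : Nonempty V := by
    obtain ⟨A, -, hA⟩ := exists_subset_card_eq (s := (univ : Finset (Fin (2 * k + r))))
      (n := k) (by simp; omega)
    exact ⟨⟨A, hA⟩⟩
  obtain ⟨X, Y, hXY⟩ := (K).exists_dist_eq_diam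
  have := (two_mul_add_two_le_dist_iff hk hr).mp (by omega : 2 * q + 2 ≤ (K).dist X Y)
  have := card_inter_add_card_sdiff X Y
  omega

section ExactDistance

variable {q : ℕ}

local notation "E" => exactDistanceGraph K (2 * (q + 1))
local notation "Δ" => min (r * (q + 1)) (k - (r * q + 1))

theorem exactDistanceGraph_adj_of (hk : 1 ≤ k) (hr : 1 ≤ r) {X Y : V}
    (hlo : r * q < #(X.1 \ Y.1)) (hhi : #(X.1 \ Y.1) ≤ Δ) : (E).Adj X Y := by
  have := card_inter_add_card_sdiff X Y
  exact (exactDistanceGraph_adj_iff hk hr).mpr ⟨hlo, by omega, by omega⟩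

theorem exists_walk_length_le_two (hk : 1 ≤ k) (hr : 1 ≤ r) (hkq : 2 * (r * q + 1) ≤ k)
    {X Y : V} (h : #(X.1 \ Y.1) ≤ 2 * Δ) : ∃ w : (E).Walk X Y, w.length ≤ 2 := by
  have hqr : r * q + r = r * (q + 1) := (mul_add_one r q).symm
  have := card_inter_add_card_sdiff X Y
  rcases Nat.eq_zero_or_pos #(X.1 \ Y.1) with h0 | hpos
  · obtain rfl := eq_of_card_sdiff_eq_zero h0
    exact ⟨.nil, by simp⟩
  by_cases hlo : r * q < #(X.1 \ Y.1)
  · by_cases hhi : #(X.1 \ Y.1) ≤ Δ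
    · exact ⟨.cons (exactDistanceGraph_adj_of hk hr hlo hhi) .nil, by simp⟩
    -- a first step of size `max (δ - Δ) (rq + 1)` leaves `C` at `|C \ Y| = Δ`
    obtain ⟨C, hXC, hCY⟩ := exists_card_sdiff_eq X Y (a := k - #(X.1 \ Y.1))
      (b := #(X.1 \ Y.1) - max (#(X.1 \ Y.1) - Δ) (r * q + 1)) (c := #(X.1 \ Y.1) - Δ)
      (d := max (#(X.1 \ Y.1) - Δ) (r * q + 1) - (#(X.1 \ Y.1) - Δ))
      (by omega) (by omega) (by omega) (by omega) (by omega)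
    have hXC' : (E).Adj X C := exactDistanceGraph_adj_of hk hr (by omega) (by omega)
    have hCY' : (E).Adj C Y := exactDistanceGraph_adj_of hk hr (by omega) (by omega)
    exact ⟨.cons hXC' (.cons hCY' .nil), by simp⟩
  -- `X` is too close to `Y`: pass through a `C` at `|X \ C| = |C \ Y| = rq + 1`
  · obtain ⟨C, hXC, hCY⟩ := exists_card_sdiff_eq X Y (a := k - (r * q + 1)) (b := 0) (c := 0)
      (d := r * q + 1) (by omega) (by omega) (by omega) (by omega) (by omega)
    have hXC' : (E).Adj X C := exactDistanceGraph_adj_of hk hr (by omega) (by omega)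
    have hCY' : (E).Adj C Y := exactDistanceGraph_adj_of hk hr (by omega) (by omega)
    exact ⟨.cons hXC' (.cons hCY' .nil), by simp⟩

theorem exists_walk_length_le (hk : 1 ≤ k) (hr : 1 ≤ r) (hkq : 2 * (r * q + 1) ≤ k) {L : ℕ}
    {X Y : V} (h : #(X.1 \ Y.1) ≤ (L + 2) * Δ) : ∃ w : (E).Walk X Y, w.length ≤ L + 2 := by
  induction L generalizing X with
  | zero => exact exists_walk_length_le_two hk hr hkq (by simpa using h)
  | succ L ih =>
    by_cases hL : #(X.1 \ Y.1) ≤ (L + 2) * Δ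
    · obtain ⟨w, hw⟩ := ih hL
      exact ⟨w, by omega⟩
    obtain ⟨C, hXC, hCY⟩ := exists_card_sdiff_eq_sub (m := Δ) (X := X) (Y := Y) (by
      have := Nat.le_mul_of_pos_left Δ (show 0 < L + 2 by omega)
      omega)
    have hqr : r * q + r = r * (q + 1) := (mul_add_one r q).symm
    have hL' : (L + 1 + 2) * Δ = (L + 2) * Δ + Δ := by ring
    obtain ⟨w, hw⟩ := ih (X := C) (by omega)
    have hXC' : (E).Adj X C := exactDistanceGraph_adj_of hk hr (by omega) (by omega)
    exact ⟨.cons hXC' w, by simp only [Walk.length_cons]; omega⟩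

theorem reachable_and_dist_le (hk : 1 ≤ k) (hr : 1 ≤ r) (hkq : 2 * (r * q + 1) ≤ k) (X Y : V) :
    (E).Reachable X Y ∧ (E).dist X Y ≤ max 2 (#(X.1 \ Y.1) ⌈/⌉ (r * (q + 1))) := by
  set m := max 2 (#(X.1 \ Y.1) ⌈/⌉ (r * (q + 1)))
  have hm : 2 ≤ m := le_max_left _ _
  have hgap : #(X.1 \ Y.1) ≤ (m - 2 + 2) * Δ := by
    rw [Nat.sub_add_cancel hm]
    rcases min_cases (r * (q + 1)) (k - (r * q + 1)) with ⟨hΔ, -⟩ | ⟨hΔ, -⟩ <;> rw [hΔ]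
    · calc #(X.1 \ Y.1) ≤ r * (q + 1) * (#(X.1 \ Y.1) ⌈/⌉ (r * (q + 1))) :=
            le_smul_ceilDiv (a := r * (q + 1)) (by positivity)
        _ ≤ m * (r * (q + 1)) := by rw [mul_comm]; gcongr; exact le_max_right _ _
    · have := card_inter_add_card_sdiff X Y
      have := Nat.mul_le_mul_right (k - (r * q + 1)) hm
      omega
  obtain ⟨w, hw⟩ := exists_walk_length_le hk hr hkq hgap
  exact ⟨⟨w⟩, (dist_le w).trans (by omega)⟩

theorem ceilDiv_le_dist (hk : 1 ≤ k) (hr : 1 ≤ r) {X Y : V} (hXY : (E).Reachable X Y) :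
    #(X.1 \ Y.1) ⌈/⌉ (r * (q + 1)) ≤ (E).dist X Y := by
  obtain ⟨w, hw⟩ := hXY.exists_walk_length_eq_dist
  rw [ceilDiv_le_iff_le_mul (by positivity), ← hw, mul_comm (r * (q + 1))]
  exact w.card_sdiff_le_length_mul Subtype.val
    fun _ _ h => ((exactDistanceGraph_adj_iff hk hr).mp h).2.1

end ExactDistance

end Kneser

theorem stmt14_general (k r p s : ℕ) (hk : 2 ≤ k) (hr : 1 ≤ r) (hp : 1 ≤ p)
    (hD : 2 * p ≤ (kneserGraph (2 * k + r) k).diam)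
    (A B : {A : Finset (Fin (2 * k + r)) // A.card = k}) (hAB : A ≠ B)
    (hnadj : ¬ (exactDistanceGraph (kneserGraph (2 * k + r) k) (2 * p)).Adj A B)
    (hs : (A.1 ∩ B.1).card = s) :
    (exactDistanceGraph (kneserGraph (2 * k + r) k) (2 * p)).dist A B
      = max 2 ((k - s) ⌈/⌉ (r * p)) := by
  obtain ⟨q, rfl⟩ : ∃ q, p = q + 1 := ⟨p - 1, by omega⟩
  have hk₁ : 1 ≤ k := by omega
  have hAB_card : #(A.1 \ B.1) = k - s := by
    have := Kneser.card_inter_add_card_sdiff A B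
    omega
  obtain ⟨hreach, hle⟩ :=
    Kneser.reachable_and_dist_le hk₁ hr (Kneser.two_mul_le_of_le_diam hk₁ hr hD) A B
  rw [hAB_card] at hle
  refine le_antisymm hle (max_le ?_ (hAB_card ▸ Kneser.ceilDiv_le_dist hk₁ hr hreach))
  have := hreach.pos_dist_of_ne hAB
  have := mt dist_eq_one_iff_adj.mp hnadj
  omega

theorem stmt14 (k r p s : ℕ) (hk : 2 ≤ k) (hr : 1 ≤ r) (hrk : r < k - 1) (hp : 1 ≤ p)
    (hD : 2 * p ≤ (kneserGraph (2 * k + r) k).diam)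
    (A B : {A : Finset (Fin (2 * k + r)) // A.card = k}) (hAB : A ≠ B)
    (hnadj : ¬ (exactDistanceGraph (kneserGraph (2 * k + r) k) (2 * p)).Adj A B)
    (hs : (A.1 ∩ B.1).card = s) :
    (exactDistanceGraph (kneserGraph (2 * k + r) k) (2 * p)).dist A B
      = max 2 ((k - s) ⌈/⌉ (r * p)) :=
  stmt14_general k r p s hk hr hp hD A B hAB hnadj hs
end

section
/- Let k ≥ 2, 1 ≤ r < k-1, p ≥ 1, with 2p+1 < diam(K(2k+r,k)). If A and B are k-subsets of [2k+r] joined by a path of length 2ℓ in K_{=2p+1}(2k+r,k), then |A ∩ B| ≥ k - 2ℓrp - rℓ; if joined by a path of length 2ℓ+1, then |A ∩ B| ≤ (2ℓ+1)rp + rℓ. -/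
/-!
Each edge of the exact distance-`(2p+1)` graph is a geodesic of length `2p+1` in the Kneser graph,
so a walk of length `m` there yields a Kneser walk of length `(2p+1)m`. Along a Kneser walk the
intersection with a fixed set alternates: if `X` and `Z` are disjoint `k`-sets of `[n]` then
`|X ∩ Y| + |Z ∩ Y| ≤ k`, while these two intersections miss at most the `n - 2k` points outside
`X ∪ Z`, so `k ≤ |X ∩ Y| + |Z ∩ Y| + (n - 2k)`. Induction on the walk gives
`k ≤ |X ∩ Y| + (n - 2k)m` after `2m` steps and `|X ∩ Y| ≤ (n - 2k)m` after `2m + 1` steps.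
-/

open Finset SimpleGraph

lemma exactDistanceGraph.exists_walk_length_eq_mul {V : Type*} {G : SimpleGraph V} {d : ℕ}
    (hd : d ≠ 0) {A B : V} (w : (exactDistanceGraph G d).Walk A B) :
    ∃ w' : G.Walk A B, w'.length = d * w.length := by
  induction w with
  | nil => exact ⟨.nil, by simp⟩
  | cons h _ ih =>
    obtain ⟨w', hw'⟩ := ih
    obtain ⟨u, hu⟩ := exists_walk_of_dist_ne_zero (h.2 ▸ hd)
    exact ⟨u.append w', by rw [Walk.length_append, hu, h.2, hw', Walk.length_cons]; ring⟩

lemma Finset.card_inter_add_card_inter_le_of_disjoint_s17 {α : Type*} [DecidableEq α]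
    {s t : Finset α} (h : Disjoint s t) (u : Finset α) : #(s ∩ u) + #(t ∩ u) ≤ #u := by
  rw [← card_union_of_disjoint (h.mono inter_subset_left inter_subset_left),
    ← union_inter_distrib_right]
  exact card_le_card inter_subset_right

lemma Finset.card_le_card_inter_add_card_inter_add_card_compl_s17 {α : Type*} [Fintype α]
    [DecidableEq α] (s t u : Finset α) : #u ≤ #(s ∩ u) + #(t ∩ u) + #(s ∪ t)ᶜ := by
  calc #u = #(u ∩ (s ∪ t)) + #(u \ (s ∪ t)) := (card_inter_add_card_sdiff _ _).symm
    _ ≤ #(s ∩ u) + #(t ∩ u) + #(s ∪ t)ᶜ := by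
      gcongr
      · rw [inter_comm, union_inter_distrib_right]
        exact card_union_le _ _
      · rw [sdiff_eq_inter_compl]
        exact inter_subset_right

namespace kneserGraph

variable {n k : ℕ} {X Z : {A : Finset (Fin n) // A.card = k}}

lemma card_inter_add_card_inter_le (h : (kneserGraph n k).Adj X Z)
    (Y : {A : Finset (Fin n) // A.card = k}) : #(X.1 ∩ Y.1) + #(Z.1 ∩ Y.1) ≤ k :=
  (card_inter_add_card_inter_le_of_disjoint_s17 h.2 Y.1).trans_eq Y.2

lemma le_card_inter_add_card_inter_add (h : (kneserGraph n k).Adj X Z)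
    (Y : {A : Finset (Fin n) // A.card = k}) : k ≤ #(X.1 ∩ Y.1) + #(Z.1 ∩ Y.1) + (n - 2 * k) := by
  have hcompl : #(X.1 ∪ Z.1)ᶜ = n - 2 * k := by
    rw [card_compl, card_union_of_disjoint h.2, X.2, Z.2, Fintype.card_fin, two_mul]
  calc k = #Y.1 := Y.2.symm
    _ ≤ #(X.1 ∩ Y.1) + #(Z.1 ∩ Y.1) + #(X.1 ∪ Z.1)ᶜ :=
      card_le_card_inter_add_card_inter_add_card_compl_s17 X.1 Z.1 Y.1
    _ = #(X.1 ∩ Y.1) + #(Z.1 ∩ Y.1) + (n - 2 * k) := by rw [hcompl]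

lemma card_inter_bounds_of_walk_s17 {X Y : {A : Finset (Fin n) // A.card = k}}
    (w : (kneserGraph n k).Walk X Y) (m : ℕ) :
    (w.length = 2 * m → k ≤ #(X.1 ∩ Y.1) + (n - 2 * k) * m) ∧
    (w.length = 2 * m + 1 → #(X.1 ∩ Y.1) ≤ (n - 2 * k) * m) := by
  induction w generalizing m with
  | @nil X =>
    refine ⟨fun _ => ?_, fun h => by simp at h⟩
    rw [inter_self, X.2]
    exact Nat.le_add_right _ _
  | @cons X Z Y h w ih =>
    rw [Walk.length_cons]
    constructor
    · intro hlen
      obtain ⟨m, rfl⟩ : ∃ m', m = m' + 1 := ⟨m - 1, by omega⟩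
      have hZY := (ih m).2 (by omega)
      have := le_card_inter_add_card_inter_add h Y
      rw [Nat.mul_succ]
      omega
    · intro hlen
      have hZY := (ih m).1 (by omega)
      have := card_inter_add_card_inter_le h Y
      omega

end kneserGraph

theorem stmt17_general (k r p ℓ : ℕ)
    (A B : {A : Finset (Fin (2 * k + r)) // A.card = k}) :
    ((∃ w : (exactDistanceGraph (kneserGraph (2 * k + r) k) (2 * p + 1)).Walk A B,
        w.length = 2 * ℓ) → k - 2 * ℓ * r * p - r * ℓ ≤ (A.1 ∩ B.1).card) ∧
    ((∃ w : (exactDistanceGraph (kneserGraph (2 * k + r) k) (2 * p + 1)).Walk A B,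
        w.length = 2 * ℓ + 1) → (A.1 ∩ B.1).card ≤ (2 * ℓ + 1) * r * p + r * ℓ) := by
  have hr : 2 * k + r - 2 * k = r := Nat.add_sub_cancel_left ..
  constructor
  · rintro ⟨w, hw⟩
    obtain ⟨w', hw'⟩ := exactDistanceGraph.exists_walk_length_eq_mul (2 * p).add_one_ne_zero w
    have hbound := (kneserGraph.card_inter_bounds_of_walk_s17 w' ((2 * p + 1) * ℓ)).1
      (by rw [hw', hw]; ring)
    rw [hr, show r * ((2 * p + 1) * ℓ) = 2 * ℓ * r * p + r * ℓ by ring] at hbound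
    omega
  · rintro ⟨w, hw⟩
    obtain ⟨w', hw'⟩ := exactDistanceGraph.exists_walk_length_eq_mul (2 * p).add_one_ne_zero w
    have hbound := (kneserGraph.card_inter_bounds_of_walk_s17 w' ((2 * p + 1) * ℓ + p)).2
      (by rw [hw', hw]; ring)
    rwa [hr, show r * ((2 * p + 1) * ℓ + p) = (2 * ℓ + 1) * r * p + r * ℓ by ring] at hbound

theorem stmt17 (k r p ℓ : ℕ) (hk : 2 ≤ k) (hr : 1 ≤ r) (hrk : r < k - 1) (hp : 1 ≤ p)
    (hd : 2 * p + 1 < (kneserGraph (2 * k + r) k).diam)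
    (A B : {A : Finset (Fin (2 * k + r)) // A.card = k}) :
    ((∃ w : (exactDistanceGraph (kneserGraph (2 * k + r) k) (2 * p + 1)).Walk A B,
        w.length = 2 * ℓ) → k - 2 * ℓ * r * p - r * ℓ ≤ (A.1 ∩ B.1).card) ∧
    ((∃ w : (exactDistanceGraph (kneserGraph (2 * k + r) k) (2 * p + 1)).Walk A B,
        w.length = 2 * ℓ + 1) → (A.1 ∩ B.1).card ≤ (2 * ℓ + 1) * r * p + r * ℓ) :=
  stmt17_general k r p ℓ A B
end
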